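/- There exists a constant β_v with 0 < β_v ≤ 1 such that for every (c,a) ∈ K^{d-1} one has max_{0≤j≤d−2} |P_{c,a}(c_j)|_v ≥ β_v · max{|c|_v, |a|_v}^d. -/

import Mathlib

open Filter

noncomputable section

variable {K : Type*} [Field K]

/-- Elementary symmetric polynomial of degree `k` evaluated at `c = (c_1, …, c_{d-2})`. -/
def esymmK {n : ℕ} (c : Fin n → K) (k : ℕ) : K :=
  ∑ s ∈ Finset.powersetCard k (Finset.univ : Finset (Fin n)), ∏ i ∈ s, c i

/-- The polynomial `P_{c,a}` of degree `d = n + 2`: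
`P_{c,a}(z) = z^d/d + ∑_{j=2}^{d-1} (-1)^{d-j} σ_{d-j}(c) z^j / j + a^d`. -/
def Pca {n : ℕ} (c : Fin n → K) (a z : K) : K :=
  z ^ (n + 2) / ((n + 2 : ℕ) : K)
    + ∑ j ∈ Finset.Icc 2 (n + 1),
        ((-1 : K) ^ (n + 2 - j) * esymmK c (n + 2 - j) * z ^ j) / ((j : ℕ) : K)
    + a ^ (n + 2)

/-- The critical points `c_0 = 0, c_1, …, c_{d-2}` of `P_{c,a}`. -/
def crit {n : ℕ} (c : Fin n → K) (i : Fin (n + 1)) : K :=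
  if h : (i : ℕ) = 0 then 0 else c ⟨(i : ℕ) - 1, by have := i.isLt; omega⟩

/-- `|c|_v = max_{1 ≤ i ≤ d-2} |c_i|_v` (with value `0` when there are no `c_i`'s). -/
def cnorm {n : ℕ} (v : AbsoluteValue K ℝ) (c : Fin n → K) : ℝ :=
  Finset.fold max 0 (fun i => v (c i)) (Finset.univ : Finset (Fin n))

/-- `α_v = max_{1 ≤ j ≤ d} |j|_v⁻¹`. -/
def alphaV (v : AbsoluteValue K ℝ) (d : ℕ) : ℝ :=
  Finset.fold max 0 (fun j : ℕ => (v ((j : ℕ) : K))⁻¹) (Finset.Icc 1 d)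

/-- `C_v(c,a) = max{ |d|_v^{1/(d-1)}, |d|_v^{1/d}·|a|_v,
max_{2≤j≤d-1} (|σ_{d-j}(c)|_v · |d/j|_v)^{1/(d-j)} }`, with `d = n + 2`. -/
def Cv {n : ℕ} (v : AbsoluteValue K ℝ) (c : Fin n → K) (a : K) : ℝ :=
  max ((v (((n + 2 : ℕ) : K))) ^ ((1 : ℝ) / ((n : ℝ) + 1)))
    (max ((v (((n + 2 : ℕ) : K))) ^ ((1 : ℝ) / ((n : ℝ) + 2)) * v a)
      (Finset.fold max 0
        (fun j : ℕ =>
          (v (esymmK c (n + 2 - j)) * v (((n + 2 : ℕ) : K) / ((j : ℕ) : K)))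
            ^ ((1 : ℝ) / ((n + 2 - j : ℕ) : ℝ)))
        (Finset.Icc 2 (n + 1))))

/-- `C̃_v(c,a) = max{ |a|_v, |c|_v, C_v(c,a) }`. -/
def Ctilde {n : ℕ} (v : AbsoluteValue K ℝ) (c : Fin n → K) (a : K) : ℝ :=
  max (v a) (max (cnorm v c) (Cv v c a))

/-- `h_{c,a,v}(z) = log max{ C̃_v(c,a), |z|_v }`. -/
def hca {n : ℕ} (v : AbsoluteValue K ℝ) (c : Fin n → K) (a : K) (z : K) : ℝ :=
  Real.log (max (Ctilde v c a) (v z))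

/-- `log⁺ = max{0, log}`. -/
def logPlus (x : ℝ) : ℝ := max 0 (Real.log x)

/-- `U_i(ε, C) = {(c,a) : max{|c|_v,|a|_v} ≥ C and |P_{c,a}(c_i)|_v ≥ ε·max{|c|_v,|a|_v}^d}`. -/
def Uset {n : ℕ} (v : AbsoluteValue K ℝ) (i : Fin (n + 1)) (ε C : ℝ) :
    Set ((Fin n → K) × K) :=
  {p | C ≤ max (cnorm v p.1) (v p.2) ∧
       ε * max (cnorm v p.1) (v p.2) ^ (n + 2) ≤ v (Pca p.1 p.2 (crit p.1 i))}

/-!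
The critical values `P_{c,a}(c_j)` are polynomials in `(c, a)`, homogeneous of degree `d` for the
scaling `(c, a, z) ↦ (t c, t a, t z)`, and their only common zero is the origin: `P(0) = a^d`
forces `a = 0`, and then `P` vanishes at every root of `P' = z ∏ (z - c_i)`, which by counting
multiplicities forces all `c_i = 0`. By the Nullstellensatz a power of each coordinate lies in
the ideal of the critical values. The ultrametric inequality bounds the certificate polynomials
on the unit polydisc, which gives `1 ≤ B · max_j |P_{c,a}(c_j)|` when `max(|c|, |a|) = 1`;
homogeneity gives the general case with `β = 1 / B`.
-/

open Finset

section Nonarchimedean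

open MvPolynomial

variable {σ ι : Type*} {v : AbsoluteValue K ℝ}

theorem IsNonarchimedean.exists_bound_eval_of_abv_le_one (hv : IsNonarchimedean v)
    (p : MvPolynomial σ K) :
    ∃ B : ℝ, 1 ≤ B ∧ ∀ x : σ → K, (∀ j, v (x j) ≤ 1) → v (eval x p) ≤ B := by
  induction p using MvPolynomial.induction_on with
  | C r => exact ⟨max 1 (v r), le_max_left _ _, fun x _ => by simp⟩
  | add p q hp hq =>
    obtain ⟨B₁, hB₁, hp⟩ := hp
    obtain ⟨B₂, -, hq⟩ := hq
    refine ⟨max B₁ B₂, hB₁.trans (le_max_left _ _), fun x hx => ?_⟩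
    rw [map_add]
    exact (hv _ _).trans (max_le_max (hp x hx) (hq x hx))
  | mul_X p j hp =>
    obtain ⟨B, hB, hp⟩ := hp
    refine ⟨B, hB, fun x hx => ?_⟩
    rw [map_mul, eval_X, map_mul]
    exact (mul_le_mul (hp x hx) (hx j) (v.nonneg _) (by linarith)).trans_eq (mul_one B)

theorem MvPolynomial.exists_sum_mul_eq_X_pow [IsAlgClosed K] [Finite σ] [Fintype ι]
    {F : ι → MvPolynomial σ K} (hF : ∀ x : σ → K, (∀ i, eval x (F i) = 0) → x = 0) (k : σ) :
    ∃ (N : ℕ) (g : ι → MvPolynomial σ K), ∑ i, g i * F i = X k ^ N := by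
  have hk : X k ∈ (Ideal.span (Set.range F)).radical := by
    rw [← vanishingIdeal_zeroLocus_eq_radical (K := K), mem_vanishingIdeal_iff]
    intro x hx
    rw [hF x fun i => hx _ (Ideal.subset_span ⟨i, rfl⟩)]
    simp
  obtain ⟨N, hN⟩ := hk
  obtain ⟨g, hg⟩ := Ideal.mem_span_range_iff_exists_fun.mp hN
  exact ⟨N, g, hg⟩

variable [IsAlgClosed K] [Fintype σ] [Nonempty σ] [Fintype ι] [Nonempty ι]

theorem IsNonarchimedean.exists_one_le_mul_sup'_eval (hv : IsNonarchimedean v)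
    {F : ι → MvPolynomial σ K} (hF : ∀ x : σ → K, (∀ i, eval x (F i) = 0) → x = 0) :
    ∃ B : ℝ, 1 ≤ B ∧ ∀ x : σ → K, (∀ j, v (x j) ≤ 1) → ∀ k, v (x k) = 1 →
      1 ≤ B * univ.sup' univ_nonempty fun i => v (eval x (F i)) := by
  choose N g hg using MvPolynomial.exists_sum_mul_eq_X_pow hF
  choose B hB₁ hB using fun k i => hv.exists_bound_eval_of_abv_le_one (g k i)
  set B' := univ.sup' univ_nonempty fun p : σ × ι => B p.1 p.2
  have hBB' (k : σ) (i : ι) : B k i ≤ B' := le_sup' (fun p : σ × ι => B p.1 p.2) (mem_univ (k, i))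
  have hB'₁ : 1 ≤ B' := (hB₁ _ _).trans (hBB' (Classical.arbitrary σ) (Classical.arbitrary ι))
  refine ⟨B', hB'₁, fun x hx k hk => ?_⟩
  calc 1 = v (eval x (∑ i, g k i * F i)) := by rw [hg, map_pow, eval_X, map_pow, hk, one_pow]
    _ ≤ univ.sup' univ_nonempty fun i => v (eval x (g k i * F i)) := by
      rw [map_sum]
      exact hv.apply_sum_le_sup univ_nonempty
    _ ≤ B' * univ.sup' univ_nonempty fun i => v (eval x (F i)) := by
      refine sup'_le _ _ fun i _ => ?_
      rw [map_mul, map_mul]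
      exact mul_le_mul ((hB k i x hx).trans (hBB' k i))
        (le_sup' (fun i => v (eval x (F i))) (mem_univ i)) (v.nonneg _) (by linarith)

theorem IsNonarchimedean.exists_mul_sup'_pow_le_sup'_eval (hv : IsNonarchimedean v)
    {F : ι → MvPolynomial σ K} {D : ℕ} (hD : D ≠ 0)
    (hhom : ∀ i (t : K) (x : σ → K), eval (t • x) (F i) = t ^ D * eval x (F i))
    (hF : ∀ x : σ → K, (∀ i, eval x (F i) = 0) → x = 0) :
    ∃ β : ℝ, 0 < β ∧ β ≤ 1 ∧ ∀ x : σ → K,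
      β * (univ.sup' univ_nonempty fun j => v (x j)) ^ D
        ≤ univ.sup' univ_nonempty fun i => v (eval x (F i)) := by
  obtain ⟨B, hB₁, hB⟩ := hv.exists_one_le_mul_sup'_eval hF
  have hB₀ : 0 < B := by linarith
  refine ⟨B⁻¹, inv_pos.mpr hB₀, inv_le_one_of_one_le₀ hB₁, fun x => ?_⟩
  obtain ⟨k, -, hk⟩ := exists_mem_eq_sup' univ_nonempty fun j => v (x j)
  set M := univ.sup' univ_nonempty fun j => v (x j)
  set S := univ.sup' univ_nonempty fun i => v (eval x (F i))
  rcases eq_or_ne (x k) 0 with hxk | hxk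
  · rw [hk, hxk, map_zero, zero_pow hD, mul_zero]
    exact le_sup'_of_le _ (mem_univ (Classical.arbitrary ι)) (v.nonneg _)
  set t := (x k)⁻¹
  have hMt : v t * M = 1 := by rw [hk, ← map_mul, inv_mul_cancel₀ hxk, map_one]
  have hbound : 1 ≤ B * (v t ^ D * S) := by
    refine (hB (t • x) (fun j => ?_) k ?_).trans (mul_le_mul_of_nonneg_left ?_ hB₀.le)
    · rw [Pi.smul_apply, smul_eq_mul, map_mul, ← hMt]
      exact mul_le_mul_of_nonneg_left (le_sup' (fun j => v (x j)) (mem_univ j)) (v.nonneg _)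
    · rw [Pi.smul_apply, smul_eq_mul, map_mul, ← hk, hMt]
    · refine sup'_le _ _ fun i _ => ?_
      rw [hhom, map_mul, map_pow]
      exact mul_le_mul_of_nonneg_left (le_sup' (fun i => v (eval x (F i))) (mem_univ i))
        (pow_nonneg (v.nonneg _) _)
  rw [inv_mul_le_iff₀ hB₀]
  calc M ^ D = M ^ D * 1 := (mul_one _).symm
    _ ≤ M ^ D * (B * (v t ^ D * S)) :=
      mul_le_mul_of_nonneg_left hbound (pow_nonneg (hk ▸ v.nonneg _) D)
    _ = (v t * M) ^ D * (B * S) := by ring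
    _ = B * S := by rw [hMt, one_pow, one_mul]

end Nonarchimedean

section Roots

open Polynomial

/-- Each distinct critical point is a root of `q` of multiplicity one more than for `q'`, and the
degree of `q` leaves room for only one extra root. -/
theorem Polynomial.eq_of_isRoot_of_derivative_eq_prod [CharZero K] {ι : Type*} [Fintype ι]
    {q : K[X]} {r : ι → K} (hdeg : q.natDegree ≤ Fintype.card ι + 1)
    (hq' : derivative q = ∏ i, (X - C (r i))) (hroot : ∀ i, q.IsRoot (r i)) (i j : ι) :
    r i = r j := by
  classical
  set M : Multiset K := univ.val.map r
  have hq'M : derivative q = (M.map fun a => X - C a).prod := by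
    rw [hq', Multiset.map_map]
    rfl
  have hroots' : (derivative q).roots = M := by rw [hq'M, roots_multiset_prod_X_sub_C]
  have hq₀ : q ≠ 0 := by
    rintro rfl
    rw [derivative_zero] at hq'M
    exact (monic_multiset_prod_of_monic _ _ fun a _ => monic_X_sub_C a).ne_zero hq'M.symm
  have hle : M + M.dedup ≤ q.roots := by
    refine Multiset.le_iff_count.mpr fun w => ?_
    rw [Multiset.count_add, Multiset.count_dedup, count_roots]
    split_ifs with hw
    · obtain ⟨l, -, rfl⟩ := Multiset.mem_map.mp hw
      have hpos := (rootMultiplicity_pos hq₀).mpr (hroot l)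
      rw [← hroots', count_roots, derivative_rootMultiplicity_of_root (hroot l)]
      omega
    · rw [Multiset.count_eq_zero.mpr hw]
      omega
  have hcard : Multiset.card M + M.toFinset.card ≤ Fintype.card ι + 1 :=
    calc Multiset.card M + M.toFinset.card = Multiset.card (M + M.dedup) := by
          rw [Multiset.card_add, Multiset.card_toFinset]
      _ ≤ q.natDegree := (Multiset.card_le_card hle).trans (card_roots' q)
      _ ≤ Fintype.card ι + 1 := hdeg
  have hM : Multiset.card M = Fintype.card ι := by simp [M]
  have hmem (l : ι) : r l ∈ M.toFinset :=
    Multiset.mem_toFinset.mpr (Multiset.mem_map_of_mem r (mem_univ l))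
  exact Finset.card_le_one.mp (by omega) _ (hmem i) _ (hmem j)

end Roots

section CriticalValues

variable {n : ℕ}

lemma esymmK_zero (c : Fin n → K) : esymmK c 0 = 1 := by
  simp [esymmK]

lemma esymmK_smul (t : K) (c : Fin n → K) (k : ℕ) : esymmK (t • c) k = t ^ k * esymmK c k := by
  rw [esymmK, esymmK, mul_sum]
  refine sum_congr rfl fun s hs => ?_
  simp only [Pi.smul_apply, smul_eq_mul, prod_mul_distrib, prod_const, (mem_powersetCard.mp hs).2]

lemma crit_zero (c : Fin n → K) : crit c 0 = 0 := rfl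

lemma crit_succ (c : Fin n → K) (j : Fin n) : crit c j.succ = c j := rfl

lemma crit_smul (t : K) (c : Fin n → K) (i : Fin (n + 1)) : crit (t • c) i = t * crit c i := by
  cases i using Fin.cases <;> simp [crit_zero, crit_succ]

lemma Pca_zero (c : Fin n → K) (a : K) : Pca c a 0 = a ^ (n + 2) := by
  have hzero : ∀ j ∈ Icc 2 (n + 1),
      (-1 : K) ^ (n + 2 - j) * esymmK c (n + 2 - j) * 0 ^ j / (j : K) = 0 := fun j hj => by
    rw [zero_pow (by rw [mem_Icc] at hj; omega), mul_zero, zero_div]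
  simp [Pca, sum_eq_zero hzero]

lemma Pca_smul (t : K) (c : Fin n → K) (a z : K) :
    Pca (t • c) (t * a) (t * z) = t ^ (n + 2) * Pca c a z := by
  have hpow : ∀ j ∈ Icc 2 (n + 1), t ^ (n + 2) = t ^ (n + 2 - j) * t ^ j := fun j hj => by
    rw [← pow_add, Nat.sub_add_cancel (by rw [mem_Icc] at hj; omega)]
  simp only [Pca, esymmK_smul, mul_add, mul_sum, mul_pow]
  congr 2
  · ring
  · refine sum_congr rfl fun j hj => ?_
    rw [hpow j hj]
    ring

open Polynomial

def PcaPoly (c : Fin n → K) : K[X] :=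
  C ((n + 2 : ℕ) : K)⁻¹ * X ^ (n + 2)
    + ∑ j ∈ Icc 2 (n + 1), C ((-1) ^ (n + 2 - j) * esymmK c (n + 2 - j) / (j : K)) * X ^ j

lemma eval_PcaPoly (c : Fin n → K) (a z : K) : (PcaPoly c).eval z + a ^ (n + 2) = Pca c a z := by
  simp only [PcaPoly, Pca, eval_add, eval_mul, eval_C, eval_pow, eval_X, eval_finsetSum]
  congr 2
  · ring
  · refine sum_congr rfl fun j _ => ?_
    ring

lemma natDegree_PcaPoly_le (c : Fin n → K) : (PcaPoly c).natDegree ≤ n + 2 := by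
  refine natDegree_add_le_of_degree_le (natDegree_C_mul_X_pow_le _ _)
    (natDegree_sum_le_of_forall_le _ _ fun j hj => (natDegree_C_mul_X_pow_le _ _).trans ?_)
  rw [mem_Icc] at hj
  omega

lemma prod_X_sub_C_eq_sum_esymmK (c : Fin n → K) :
    ∏ i, (X - C (c i)) = ∑ k ∈ range (n + 1), C ((-1) ^ k * esymmK c k) * X ^ (n - k) := by
  have h := Multiset.prod_X_sub_X_eq_sum_esymm (univ.val.map c)
  rw [Multiset.map_map, Multiset.card_map, card_val, card_univ, Fintype.card_fin] at h
  refine (prod_eq_multiset_prod _ _).trans (h.trans (sum_congr rfl fun k _ => ?_))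
  rw [esymm_map_val, map_mul, map_pow, map_neg, map_one, mul_assoc]
  rfl

lemma derivative_PcaPoly [CharZero K] (c : Fin n → K) :
    derivative (PcaPoly c) = ∏ i : Fin (n + 1), (X - C (crit c i)) := by
  simp only [Fin.prod_univ_succ, crit_zero, crit_succ, map_zero, sub_zero,
    prod_X_sub_C_eq_sum_esymmK, sum_range_succ', PcaPoly, derivative_add,
    derivative_C_mul_X_pow, derivative_sum]
  rw [mul_add, mul_sum, add_comm]
  congr 1
  · refine sum_nbij' (fun j => n + 1 - j) (fun k => n + 1 - k) ?_ ?_ ?_ ?_ fun j hj => ?_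
    iterate 4 · intro k hk; simp only [mem_Icc, mem_range] at hk ⊢; omega
    simp only [mem_Icc] at hj
    have hj₀ : (j : K) ≠ 0 := Nat.cast_ne_zero.mpr (by omega)
    rw [div_mul_cancel₀ _ hj₀, show n + 1 - j + 1 = n + 2 - j by omega, ← mul_assoc, mul_comm X,
      mul_assoc, ← pow_succ', show n - (n + 2 - j) + 1 = j - 1 by omega]
  · have hd : ((n + 2 : ℕ) : K) ≠ 0 := Nat.cast_ne_zero.mpr (by omega)
    rw [inv_mul_cancel₀ hd, esymmK_zero, pow_zero, one_mul, map_one, one_mul, one_mul, ← pow_succ']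
    rfl

theorem eq_zero_of_Pca_crit_eq_zero [CharZero K] {c : Fin n → K} {a : K}
    (h : ∀ i, Pca c a (crit c i) = 0) : c = 0 ∧ a = 0 := by
  have ha : a = 0 := by
    have h0 := h 0
    rwa [crit_zero, Pca_zero, pow_eq_zero_iff (by omega)] at h0
  subst ha
  have hroot (i : Fin (n + 1)) : (PcaPoly c).IsRoot (crit c i) := by
    have hi := eval_PcaPoly c 0 (crit c i)
    rwa [h, zero_pow (by omega), add_zero] at hi
  have hcrit := eq_of_isRoot_of_derivative_eq_prod (by simpa using natDegree_PcaPoly_le c)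
    (derivative_PcaPoly c) hroot
  refine ⟨funext fun j => ?_, rfl⟩
  simpa [crit_succ, crit_zero] using hcrit j.succ 0

end CriticalValues

section CriticalValuePolynomials

open MvPolynomial

variable (n : ℕ)

/-- Coordinates on `K ^ (n + 1)` are `(c, a)`, with `a` the last one. -/
def critPointMv : Fin (n + 1) → MvPolynomial (Fin (n + 1)) K :=
  Fin.cons 0 fun j => X j.castSucc

def critValueMv (i : Fin (n + 1)) : MvPolynomial (Fin (n + 1)) K :=
  C ((n + 2 : ℕ) : K)⁻¹ * critPointMv n i ^ (n + 2)
    + ∑ j ∈ Icc 2 (n + 1), C ((-1) ^ (n + 2 - j) / (j : K))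
        * rename Fin.castSucc (esymm (Fin n) K (n + 2 - j)) * critPointMv n i ^ j
    + X (Fin.last n) ^ (n + 2)

variable {n}

lemma eval_esymm_eq_esymmK (c : Fin n → K) (k : ℕ) :
    eval c (esymm (Fin n) K k) = esymmK c k := by
  simp [esymm, esymmK]

lemma eval_critPointMv (x : Fin (n + 1) → K) (i : Fin (n + 1)) :
    eval x (critPointMv n i) = crit (Fin.init x) i := by
  cases i using Fin.cases <;> simp [critPointMv, crit_zero, crit_succ, Fin.init]

lemma eval_critValueMv (x : Fin (n + 1) → K) (i : Fin (n + 1)) :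
    eval x (critValueMv n i) = Pca (Fin.init x) (x (Fin.last n)) (crit (Fin.init x) i) := by
  have hinit : x ∘ Fin.castSucc = Fin.init x := rfl
  simp only [critValueMv, Pca, map_add, map_mul, map_sum, map_pow, eval_C, eval_X, eval_rename,
    hinit, eval_esymm_eq_esymmK, eval_critPointMv]
  congr 2
  · ring
  · refine sum_congr rfl fun j _ => ?_
    ring

lemma eval_smul_critValueMv (i : Fin (n + 1)) (t : K) (x : Fin (n + 1) → K) :
    eval (t • x) (critValueMv n i) = t ^ (n + 2) * eval x (critValueMv n i) := by
  rw [eval_critValueMv, eval_critValueMv, show Fin.init (t • x) = t • Fin.init x from rfl,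
    crit_smul]
  exact Pca_smul t _ _ _

lemma eq_zero_of_eval_critValueMv_eq_zero [CharZero K] (x : Fin (n + 1) → K)
    (h : ∀ i, eval x (critValueMv n i) = 0) : x = 0 := by
  simp only [eval_critValueMv] at h
  obtain ⟨hc, ha⟩ := eq_zero_of_Pca_crit_eq_zero h
  rw [← Fin.snoc_init_self x, hc, ha]
  ext j
  cases j using Fin.lastCases <;> simp

end CriticalValuePolynomials

lemma sup'_abv_snoc_eq_max_cnorm {n : ℕ} (v : AbsoluteValue K ℝ) (c : Fin n → K) (a : K) :
    univ.sup' univ_nonempty (fun j => v (Fin.snoc (α := fun _ => K) c a j))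
      = max (cnorm v c) (v a) := by
  have hcnorm (i : Fin n) : v (c i) ≤ cnorm v c :=
    (le_fold_max _).mpr (.inr ⟨i, mem_univ i, le_rfl⟩)
  refine le_antisymm (sup'_le _ _ fun j _ => ?_) (max_le ?_ ?_)
  · cases j using Fin.lastCases <;> simp [le_max_of_le_left (hcnorm _)]
  · rw [cnorm, fold_max_le]
    refine ⟨le_sup'_of_le _ (mem_univ 0) (v.nonneg _), fun i _ => ?_⟩
    exact le_sup'_of_le _ (mem_univ i.castSucc) (by simp)
  · exact le_sup'_of_le _ (mem_univ (Fin.last n)) (by simp)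

/-- there is a constant `0 < β_v ≤ 1` such that for every `(c,a) ∈ K^{d-1}`,
`max_{0≤j≤d-2} |P_{c,a}(c_j)|_v ≥ β_v · max{|c|_v, |a|_v}^d`, with `d = n + 2`. -/
theorem statement9 {K : Type*} [Field K] [IsAlgClosed K] [CharZero K]
    (v : AbsoluteValue K ℝ) (hv : ∀ x y : K, v (x + y) ≤ max (v x) (v y)) (n : ℕ) :
    ∃ β : ℝ, 0 < β ∧ β ≤ 1 ∧
      ∀ (c : Fin n → K) (a : K),
        β * max (cnorm v c) (v a) ^ (n + 2)
          ≤ Finset.univ.sup' Finset.univ_nonempty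
              fun j : Fin (n + 1) => v (Pca c a (crit c j)) := by
  obtain ⟨β, hβ₀, hβ₁, hβ⟩ := IsNonarchimedean.exists_mul_sup'_pow_le_sup'_eval
    (F := critValueMv n) hv (by omega) eval_smul_critValueMv eq_zero_of_eval_critValueMv_eq_zero
  refine ⟨β, hβ₀, hβ₁, fun c a => ?_⟩
  simpa [sup'_abv_snoc_eq_max_cnorm, eval_critValueMv] using hβ (Fin.snoc c a)
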